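/- arXiv:2202.12217 — 7 statements merged into one kernel-verified Lean document; each statement's English description precedes it below -/
import Mathlib

section
/- Polar decomposition for symmetric pairs of odd order: let Ω be a finite group of odd order and θ an involution of Ω. Then Ω = Ω^θ · Ω^{θ∘inv}, i.e., every g ∈ Ω can be written as g = o · s where θ(o) = o and θ(s) = s⁻¹. -/
/-- Polar decomposition for symmetric pairs of odd order: if `Ω` is a finite group of odd
order and `θ` is an involution of `Ω`, then every `g ∈ Ω` can be written as `g = o * s`
with `θ o = o` and `θ s = s⁻¹`. -/
theorem stmt_2 (Ω : Type*) [Group Ω] [Fintype Ω] (hodd : Odd (Fintype.card Ω))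
    (θ : Ω ≃* Ω) (hθ : ∀ g : Ω, θ (θ g) = g) (g : Ω) :
    ∃ o s : Ω, θ o = o ∧ θ s = s⁻¹ ∧ g = o * s := by
  obtain ⟨k, hk⟩ := hodd
  set x : Ω := (θ g)⁻¹ * g with hx
  have hθx : θ x = x⁻¹ := by
    simp [hx, hθ, mul_inv_rev]
  set s : Ω := x ^ (k + 1) with hs
  have hs2 : s * s = x := by
    have hcard : x ^ Fintype.card Ω = 1 := pow_card_eq_one
    rw [hk] at hcard
    rw [hs, ← pow_add, show (k + 1) + (k + 1) = (2 * k + 1) + 1 by ring, pow_succ,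
      hcard, one_mul]
  have hθs : θ s = s⁻¹ := by
    rw [hs, map_pow, hθx, inv_pow]
  refine ⟨g * s⁻¹, s, ?_, hθs, by group⟩
  rw [map_mul, map_inv, hθs, inv_inv]
  have : θ g = g * s⁻¹ * s⁻¹ := by
    rw [mul_assoc, ← mul_inv_rev, hs2, hx, mul_inv_rev, inv_inv, ← mul_assoc,
      mul_inv_cancel, one_mul]
  rw [this]; group
end

section
/- Gelfand–Kazhdan property for symmetric pairs of odd order: let Ω be a finite group of odd order and θ an involution of Ω. Then for every g ∈ Ω there exist h₁, h₂ ∈ Ω^θ such that h₁ · g · h₂ = θ(g⁻¹). -/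
/-- Gelfand–Kazhdan property for symmetric pairs of odd order: if `Ω` is a finite group of
odd order and `θ` an involution of `Ω`, then for every `g ∈ Ω` there are `h₁ h₂ ∈ Ω^θ`
with `h₁ * g * h₂ = θ g⁻¹`. -/
theorem stmt_3 (Ω : Type*) [Group Ω] [Fintype Ω] (hodd : Odd (Fintype.card Ω))
    (θ : Ω ≃* Ω) (hθ : ∀ g : Ω, θ (θ g) = g) (g : Ω) :
    ∃ h₁ h₂ : Ω, θ h₁ = h₁ ∧ θ h₂ = h₂ ∧ h₁ * g * h₂ = θ g⁻¹ := by
  obtain ⟨k, hk⟩ := hodd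
  set p : Ω := g * (θ g)⁻¹ with hp
  have hθp : θ p = p⁻¹ := by
    simp only [hp, map_mul, map_inv, hθ, mul_inv_rev, inv_inv]
  set s : Ω := p ^ (k + 1) with hs
  have hs2 : s * s = p := by
    have h1 : p ^ Fintype.card Ω = 1 := pow_card_eq_one
    rw [hk] at h1
    rw [hs, ← pow_add, show k + 1 + (k + 1) = (2 * k + 1) + 1 by ring,
      pow_succ, h1, one_mul]
  have hθs : θ s = s⁻¹ := by
    rw [hs, map_pow, hθp, inv_pow]
  have key : (θ g)⁻¹ * s⁻¹ = g⁻¹ * s := by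
    have h2 : s * s = g * (θ g)⁻¹ := hs2
    calc (θ g)⁻¹ * s⁻¹ = g⁻¹ * (g * (θ g)⁻¹) * s⁻¹ := by group
      _ = g⁻¹ * (s * s) * s⁻¹ := by rw [h2]
      _ = g⁻¹ * s := by group
  refine ⟨g⁻¹ * s, g⁻¹ * s, ?_, ?_, ?_⟩
  · rw [map_mul, map_inv, hθs]; exact key
  · rw [map_mul, map_inv, hθs]; exact key
  · rw [map_inv]
    calc g⁻¹ * s * g * (g⁻¹ * s) = g⁻¹ * (s * s) := by group
      _ = g⁻¹ * (g * (θ g)⁻¹) := by rw [hs2]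
      _ = (θ g)⁻¹ := by group
end

section
/- Gelfand property for symmetric pairs of odd order: let Ω be a finite group of odd order and θ an involution of Ω. Then for every irreducible finite-dimensional complex representation ρ of Ω, the dimension of the subspace ρ^{Ω^θ} of Ω^θ-invariant vectors is at most 1. -/
/-- The subgroup of fixed points of an automorphism `θ` of `G`. -/
def fixedSubgroup {G : Type*} [Group G] (θ : G ≃* G) : Subgroup G where
  carrier := {g | θ g = g}
  one_mem' := map_one θ
  mul_mem' := by
    intro a b ha hb
    simp only [Set.mem_setOf_eq] at *
    rw [map_mul, ha, hb]
  inv_mem' := by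
    intro a ha
    simp only [Set.mem_setOf_eq] at *
    rw [map_inv, ha]

/-- A representation is irreducible if the space is nonzero and the only invariant
subspaces are `⊥` and `⊤`. -/
def IsIrredRep {G V : Type*} [Group G] [AddCommGroup V] [Module ℂ V]
    (ρ : Representation ℂ G V) : Prop :=
  Nontrivial V ∧ ∀ U : Submodule ℂ V, (∀ g : G, ∀ v ∈ U, ρ g v ∈ U) → U = ⊥ ∨ U = ⊤

lemma mem_fixedSubgroup_iff {G : Type*} [Group G] (θ : G ≃* G) (g : G) :
    g ∈ fixedSubgroup θ ↔ θ g = g := Iff.rfl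


lemma key_decomp {Ω : Type*} [Group Ω] [Fintype Ω] (hodd : Odd (Fintype.card Ω))
    (θ : Ω ≃* Ω) (hθ : ∀ g : Ω, θ (θ g) = g) (g : Ω) :
    ∃ h : Ω, θ h = h ∧ θ g⁻¹ = h * g * h := by
  set t := (θ g)⁻¹ * g with ht
  have hθt : θ t = t⁻¹ := by
    simp only [ht, map_mul, map_inv, hθ, mul_inv_rev, inv_inv]
  have hto : Odd (orderOf t) := by
    rcases Nat.even_or_odd (orderOf t) with he | ho
    · exfalso
      exact (Nat.not_even_iff_odd.mpr hodd)
        (even_iff_two_dvd.mpr (dvd_trans (even_iff_two_dvd.mp he) orderOf_dvd_card))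
    · exact ho
  obtain ⟨m, hm⟩ := hto
  set s := t ^ (m + 1) with hs
  have hss : s * s = t := by
    rw [hs, ← pow_add, show m + 1 + (m + 1) = orderOf t + 1 by omega, pow_succ,
      pow_orderOf_eq_one, one_mul]
  have hθs : θ s = s⁻¹ := by
    rw [hs, map_pow, hθt, inv_pow]
  have hgt : θ g = g * t⁻¹ := by
    rw [ht]; group
  refine ⟨(g * s⁻¹)⁻¹, ?_, ?_⟩
  · rw [map_inv, map_mul, map_inv, hθs, inv_inv, hgt]
    rw [show t⁻¹ = s⁻¹ * s⁻¹ by rw [← mul_inv_rev, hss]]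
    group
  · rw [map_inv, hgt]
    rw [show t⁻¹ = s⁻¹ * s⁻¹ by rw [← mul_inv_rev, hss]]
    group
    rw [zpow_two]

section Main

variable {Ω : Type*} [Group Ω] [Fintype Ω]
    (θ : Ω ≃* Ω)
    {V : Type*} [AddCommGroup V] [Module ℂ V] [FiniteDimensional ℂ V]
    (ρ : Representation ℂ Ω V)

theorem stmt_4' (hodd : Odd (Fintype.card Ω)) (hθ : ∀ g : Ω, θ (θ g) = g)
    (hρ : IsIrredRep ρ) :
    Module.finrank ℂ (Representation.invariants (ρ.comp (fixedSubgroup θ).subtype)) ≤ 1 := by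
  classical
  set H := fixedSubgroup θ with hHdef
  letI : Fintype H := Fintype.ofFinite _
  set W := Representation.invariants (ρ.comp H.subtype) with hWdef
  by_cases hWbot : W = ⊥
  · rw [hWbot]
    simp
  · obtain ⟨w₀, hw₀W, hw₀⟩ := (Submodule.ne_bot_iff W).mp hWbot
    set c : ℂ := (Fintype.card H : ℂ) with hcdef
    have hc : c ≠ 0 := Nat.cast_ne_zero.mpr Fintype.card_ne_zero
    set P : V →ₗ[ℂ] V := c⁻¹ • ∑ h : H, ρ (h : Ω) with hPdef
    -- absorption
    have habsL : ∀ h₀ : H, ρ (h₀ : Ω) * P = P := by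
      intro h₀
      rw [hPdef, mul_smul_comm, Finset.mul_sum]
      congr 1
      calc ∑ h : H, ρ (h₀ : Ω) * ρ (h : Ω)
          = ∑ h : H, ρ ((h₀ * h : H) : Ω) := by
            refine Finset.sum_congr rfl fun h _ => ?_
            rw [Subgroup.coe_mul, map_mul]
        _ = ∑ h : H, ρ (h : Ω) := Equiv.sum_comp (Equiv.mulLeft h₀) (fun h : H => ρ (h : Ω))
    have habsR : ∀ h₀ : H, P * ρ (h₀ : Ω) = P := by
      intro h₀
      rw [hPdef, smul_mul_assoc, Finset.sum_mul]
      congr 1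
      calc ∑ h : H, ρ (h : Ω) * ρ (h₀ : Ω)
          = ∑ h : H, ρ ((h * h₀ : H) : Ω) := by
            refine Finset.sum_congr rfl fun h _ => ?_
            rw [Subgroup.coe_mul, map_mul]
        _ = ∑ h : H, ρ (h : Ω) := Equiv.sum_comp (Equiv.mulRight h₀) (fun h : H => ρ (h : Ω))
    have hPP : P * P = P := by
      nth_rewrite 1 [hPdef]
      rw [smul_mul_assoc, Finset.sum_mul]
      have : ∑ h : H, ρ (h : Ω) * P = ∑ _h : H, P := Finset.sum_congr rfl fun h _ => habsL h
      rw [this, Finset.sum_const, Finset.card_univ, ← Nat.cast_smul_eq_nsmul ℂ, smul_smul,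
        inv_mul_cancel₀ hc, one_smul]
    have hPmem : ∀ v : V, P v ∈ W := by
      intro v
      rw [hWdef, Representation.mem_invariants]
      intro h
      have := congrArg (fun f : V →ₗ[ℂ] V => f v) (habsL h)
      simpa using this
    have hPfix : ∀ w ∈ W, P w = w := by
      intro w hw
      have hw' : ∀ h : H, ρ (h : Ω) w = w := fun h =>
        (Representation.mem_invariants _ w).mp hw h
      rw [hPdef, LinearMap.smul_apply, LinearMap.coe_sum, Finset.sum_apply]
      simp only [hw']
      rw [Finset.sum_const, Finset.card_univ, ← Nat.cast_smul_eq_nsmul ℂ, smul_smul,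
        inv_mul_cancel₀ hc, one_smul]
    set T : Ω → (V →ₗ[ℂ] V) := fun g => P * ρ g * P with hTdef
    have hTabs : ∀ h₁ h₂ : Ω, θ h₁ = h₁ → θ h₂ = h₂ → ∀ g : Ω, T (h₁ * g * h₂) = T g := by
      intro h₁ h₂ hh₁ hh₂ g
      have e₁ : P * ρ h₁ = P := habsR ⟨h₁, hh₁⟩
      have e₂ : ρ h₂ * P = P := habsL ⟨h₂, hh₂⟩
      calc T (h₁ * g * h₂) = (P * ρ h₁) * ρ g * (ρ h₂ * P) := by
            rw [hTdef]; simp only [map_mul]; noncomm_ring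
        _ = P * ρ g * P := by rw [e₁, e₂]
        _ = T g := rfl
    have hTσ : ∀ g : Ω, T (θ g⁻¹) = T g := by
      intro g
      obtain ⟨h, hh, heq⟩ := key_decomp hodd θ hθ g
      rw [heq, hTabs h h hh hh]
    have hTmul : ∀ g g' : Ω, T g * T g' = c⁻¹ • ∑ h : H, T (g * (h : Ω) * g') := by
      intro g g'
      have step : T g * T g' = (P * ρ g) * (P * P) * (ρ g' * P) := by
        rw [hTdef]; noncomm_ring
      rw [step, hPP]
      nth_rewrite 1 [hPdef]
      rw [mul_smul_comm, smul_mul_assoc, Finset.mul_sum, Finset.sum_mul]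
      congr 1
      refine Finset.sum_congr rfl fun h _ => ?_
      rw [hTdef]
      simp only [map_mul]
      noncomm_ring
    have hcomm : ∀ g g' : Ω, T g * T g' = T g' * T g := by
      intro g g'
      calc T g * T g' = c⁻¹ • ∑ h : H, T (g * (h : Ω) * g') := hTmul g g'
        _ = c⁻¹ • ∑ h : H, T (θ g'⁻¹ * (h : Ω) * θ g⁻¹) := by
            congr 1
            refine Fintype.sum_equiv (Equiv.inv H) _ _ fun h => ?_
            have hh : θ ((h : Ω))⁻¹ = ((h : Ω))⁻¹ := by rw [map_inv, h.2]
            rw [← hTσ (g * (h : Ω) * g')]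
            congr 1
            simp only [mul_inv_rev, map_mul, hh, Equiv.inv_apply, Subgroup.coe_inv]
            group
        _ = T (θ g'⁻¹) * T (θ g⁻¹) := (hTmul _ _).symm
        _ = T g' * T g := by rw [hTσ, hTσ]
    -- T g maps into W
    have hTW : ∀ (g : Ω) (v : V), T g v ∈ W := by
      intro g v
      have : T g v = P ((ρ g * P) v) := by
        rw [hTdef]
        simp only [Module.End.mul_apply]
      rw [this]
      exact hPmem _
    -- every T g acts on W as a scalar
    have hscalar : ∀ g : Ω, ∃ μ : ℂ, ∀ w ∈ W, T g w = μ • w := by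
      intro g
      have hres : ∀ v ∈ W, T g v ∈ W := fun v _ => hTW g v
      set Tr : W →ₗ[ℂ] W := (T g).restrict hres with hTr
      haveI : Nontrivial W := ⟨⟨w₀, hw₀W⟩, 0, by simp [Subtype.ext_iff, hw₀]⟩
      obtain ⟨μ, hμ⟩ := Module.End.exists_eigenvalue Tr
      obtain ⟨v, hv⟩ := hμ.exists_hasEigenvector
      refine ⟨μ, ?_⟩
      set E : Submodule ℂ V := W ⊓ Module.End.eigenspace (T g) μ with hEdef
      have hvE : (v : V) ∈ E := by
        rw [hEdef, Submodule.mem_inf]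
        refine ⟨v.2, ?_⟩
        rw [Module.End.mem_eigenspace_iff]
        have := hv.apply_eq_smul
        have h2 : ((Tr v : W) : V) = T g (v : V) := rfl
        rw [this] at h2
        simpa using h2.symm
      have hvne : (v : V) ≠ 0 := fun hv0 => hv.2 (Subtype.ext hv0)
      -- E is stable under all T g'
      have hTE : ∀ (g' : Ω), ∀ x ∈ E, T g' x ∈ E := by
        intro g' x hx
        rw [hEdef, Submodule.mem_inf] at hx ⊢
        obtain ⟨hxW, hxe⟩ := hx
        rw [Module.End.mem_eigenspace_iff] at hxe
        refine ⟨hTW g' x, ?_⟩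
        rw [Module.End.mem_eigenspace_iff]
        have hcx : T g (T g' x) = T g' (T g x) := by
          have := congrArg (fun f : V →ₗ[ℂ] V => f x) (hcomm g g')
          simpa using this
        rw [hcx, hxe, map_smul]
      -- the subrepresentation generated by E is everything
      set U : Submodule ℂ V :=
        Submodule.span ℂ {x : V | ∃ (g' : Ω) (e : V), e ∈ E ∧ x = ρ g' e} with hUdef
      have hUinv : ∀ g' : Ω, ∀ x ∈ U, ρ g' x ∈ U := by
        intro g' x hx
        induction hx using Submodule.span_induction with
        | mem y hy =>
          obtain ⟨g'', e, he, rfl⟩ := hy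
          apply Submodule.subset_span
          exact ⟨g' * g'', e, he, by rw [map_mul]; rfl⟩
        | zero => simp
        | add y z _ _ hy hz => rw [map_add]; exact U.add_mem hy hz
        | smul a y _ hy => rw [map_smul]; exact U.smul_mem a hy
      have hUtop : U = ⊤ := by
        rcases hρ.2 U hUinv with h | h
        · exfalso
          have : (v : V) ∈ U := Submodule.subset_span ⟨1, v, hvE, by simp⟩
          rw [h, Submodule.mem_bot] at this
          exact hvne this
        · exact h
      -- P maps U into E
      have hPU : ∀ x ∈ U, P x ∈ E := by
        intro x hx
        induction hx using Submodule.span_induction with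
        | mem y hy =>
          obtain ⟨g'', e, he, rfl⟩ := hy
          have hPe : P e = e := hPfix e he.1
          have heq : P (ρ g'' e) = T g'' e := by
            rw [hTdef]
            simp only [Module.End.mul_apply, hPe]
          rw [heq]
          exact hTE g'' e he
        | zero => rw [map_zero]; exact E.zero_mem
        | add y z _ _ hy hz => rw [map_add]; exact E.add_mem hy hz
        | smul a y _ hy => rw [map_smul]; exact E.smul_mem a hy
      intro w hw
      have hwE : w ∈ E := by
        have := hPU w (hUtop ▸ Submodule.mem_top)
        rwa [hPfix w hw] at this
      rw [hEdef, Submodule.mem_inf] at hwE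
      exact Module.End.mem_eigenspace_iff.mp hwE.2
    -- conclusion: W ⊆ span {w₀}
    set U0 : Submodule ℂ V := Submodule.span ℂ {x : V | ∃ g' : Ω, x = ρ g' w₀} with hU0def
    have hU0inv : ∀ g' : Ω, ∀ x ∈ U0, ρ g' x ∈ U0 := by
      intro g' x hx
      induction hx using Submodule.span_induction with
      | mem y hy =>
        obtain ⟨g'', rfl⟩ := hy
        exact Submodule.subset_span ⟨g' * g'', by rw [map_mul]; rfl⟩
      | zero => simp
      | add y z _ _ hy hz => rw [map_add]; exact U0.add_mem hy hz
      | smul a y _ hy => rw [map_smul]; exact U0.smul_mem a hy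
    have hU0top : U0 = ⊤ := by
      rcases hρ.2 U0 hU0inv with h | h
      · exfalso
        have : w₀ ∈ U0 := Submodule.subset_span ⟨1, by simp⟩
        rw [h, Submodule.mem_bot] at this
        exact hw₀ this
      · exact h
    have hPspan : ∀ x ∈ U0, P x ∈ Submodule.span ℂ {w₀} := by
      intro x hx
      induction hx using Submodule.span_induction with
      | mem y hy =>
        obtain ⟨g', rfl⟩ := hy
        obtain ⟨μ, hμ⟩ := hscalar g'
        have heq : P (ρ g' w₀) = T g' w₀ := by
          rw [hTdef]
          simp only [Module.End.mul_apply, hPfix w₀ hw₀W]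
        rw [heq, hμ w₀ hw₀W]
        exact Submodule.smul_mem _ μ (Submodule.mem_span_singleton_self w₀)
      | zero => rw [map_zero]; exact Submodule.zero_mem _
      | add y z _ _ hy hz => rw [map_add]; exact Submodule.add_mem _ hy hz
      | smul a y _ hy => rw [map_smul]; exact Submodule.smul_mem _ a hy
    have hWle : W ≤ Submodule.span ℂ {w₀} := by
      intro w hw
      have := hPspan w (hU0top ▸ Submodule.mem_top)
      rwa [hPfix w hw] at this
    calc Module.finrank ℂ W ≤ Module.finrank ℂ (Submodule.span ℂ {w₀}) :=
          Submodule.finrank_mono hWle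
      _ = 1 := finrank_span_singleton hw₀

end Main


/-- Gelfand property for symmetric pairs of odd order: for a finite group `Ω` of odd
order with involution `θ` and any irreducible complex representation `ρ` of `Ω`, the
space of `Ω^θ`-invariant vectors has dimension at most `1`. -/
theorem stmt_4 (Ω : Type*) [Group Ω] [Fintype Ω] (hodd : Odd (Fintype.card Ω))
    (θ : Ω ≃* Ω) (hθ : ∀ g : Ω, θ (θ g) = g)
    (V : Type*) [AddCommGroup V] [Module ℂ V] [FiniteDimensional ℂ V]
    (ρ : Representation ℂ Ω V) (hρ : IsIrredRep ρ) :
    Module.finrank ℂ (Representation.invariants (ρ.comp (fixedSubgroup θ).subtype)) ≤ 1 := by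
  exact stmt_4' θ ρ hodd hθ hρ
end

section
/- Lapid–Prasad property for symmetric pairs of odd order: let Ω be a finite group of odd order, θ an involution of Ω, and ρ an irreducible finite-dimensional complex representation of Ω. If the subspace ρ^{Ω^θ} of Ω^θ-invariant vectors is nonzero, then the dual representation ρ* is isomorphic to the representation ρ ∘ θ obtained by precomposing ρ with θ. -/
/-- Lapid–Prasad property for symmetric pairs of odd order: if `Ω` is a finite group of odd
order, `θ` an involution of `Ω`, and `ρ` an irreducible complex representation of `Ω` with a
nonzero `Ω^θ`-invariant vector, then the dual representation `ρ*` is isomorphic to `ρ ∘ θ`. -/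
theorem stmt_5 (Ω : Type*) [Group Ω] [Fintype Ω] (hodd : Odd (Fintype.card Ω))
    (θ : Ω ≃* Ω) (hθ : ∀ g : Ω, θ (θ g) = g)
    (V : Type*) [AddCommGroup V] [Module ℂ V] [FiniteDimensional ℂ V]
    (ρ : Representation ℂ Ω V) (hρ : IsIrredRep ρ)
    (hdist : Representation.invariants (ρ.comp (fixedSubgroup θ).subtype) ≠ ⊥) :
    ∃ e : Module.Dual ℂ V ≃ₗ[ℂ] V, ∀ (g : Ω) (φ : Module.Dual ℂ V),
      e (ρ.dual g φ) = ρ (θ g) (e φ) := by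
  classical
  obtain ⟨hnt, hirr⟩ := hρ
  obtain ⟨v₀, hv₀mem, hv₀⟩ := Submodule.exists_mem_ne_zero_of_ne_bot hdist
  have hfix : ∀ h : fixedSubgroup θ, ρ (h : Ω) v₀ = v₀ := fun h =>
    (Representation.mem_invariants _ v₀).mp hv₀mem h
  -- a dual functional equal to 1 on v₀
  obtain ⟨ψ', hψ'⟩ : ∃ ψ' : Module.Dual ℂ V, ψ' v₀ ≠ 0 := by
    by_contra hcon
    push_neg at hcon
    exact hv₀ ((Module.forall_dual_apply_eq_zero_iff ℂ v₀).mp hcon)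
  set ψ : Module.Dual ℂ V := (ψ' v₀)⁻¹ • ψ' with hψdef
  have hψ : ψ v₀ = 1 := by
    simp [hψdef, inv_mul_cancel₀ hψ']
  -- average over H to get an H-invariant functional
  set H := fixedSubgroup θ
  have hcardH : ((Fintype.card H : ℂ)) ≠ 0 := by
    exact_mod_cast Nat.cast_ne_zero.mpr Fintype.card_ne_zero
  set φ₀ : Module.Dual ℂ V :=
    (Fintype.card H : ℂ)⁻¹ • ∑ h : H, ψ ∘ₗ ρ (h : Ω) with hφ₀def
  have hφ₀inv : ∀ (h : H) (v : V), φ₀ (ρ (h : Ω) v) = φ₀ v := by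
    intro h v
    simp only [hφ₀def, LinearMap.smul_apply, LinearMap.coe_sum, Finset.sum_apply,
      LinearMap.coe_comp, Function.comp_apply]
    congr 1
    refine Fintype.sum_equiv (Equiv.mulRight h) _ _ ?_
    intro h'
    have : ρ (h' : Ω) (ρ (h : Ω) v) = ρ ((↑(h' * h) : Ω)) v := by
      rw [Subgroup.coe_mul, map_mul]; rfl
    rw [this]
    rfl
  have hφ₀v₀ : φ₀ v₀ = 1 := by
    simp only [hφ₀def, LinearMap.smul_apply, LinearMap.coe_sum, Finset.sum_apply,
      LinearMap.coe_comp, Function.comp_apply]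
    have : ∀ h : H, ψ (ρ (h : Ω) v₀) = 1 := fun h => by rw [hfix, hψ]
    rw [Finset.sum_congr rfl (fun h _ => this h)]
    simp [hcardH]
  -- the relative matrix coefficient
  set f : Ω → ℂ := fun g => φ₀ (ρ g v₀) with hfdef
  have hfr : ∀ (g : Ω) (h : H), f (g * (h : Ω)) = f g := by
    intro g h
    simp only [hfdef, map_mul, Module.End.mul_apply, hfix]
  have hfl : ∀ (g : Ω) (h : H), f ((h : Ω) * g) = f g := by
    intro g h
    simp only [hfdef, map_mul, Module.End.mul_apply]
    exact hφ₀inv h _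
  -- Springer decomposition using odd order
  have springer : ∀ g : Ω, ∃ h s : Ω, h ∈ H ∧ θ s = s⁻¹ ∧ g = h * s := by
    intro g
    set m : Ω := (θ g)⁻¹ * g with hmdef
    have hm : θ m = m⁻¹ := by
      simp only [hmdef, map_mul, map_inv, hθ, mul_inv_rev, inv_inv]
    obtain ⟨n, hn⟩ := hodd
    set s : Ω := m ^ (n + 1) with hsdef
    have hpow : m ^ Fintype.card Ω = 1 := pow_card_eq_one
    have hs2 : s * s = m := by
      rw [hsdef, ← pow_add]
      have hexp : n + 1 + (n + 1) = Fintype.card Ω + 1 := by omega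
      rw [hexp, pow_succ, hpow, one_mul]
    have hθs : θ s = s⁻¹ := by rw [hsdef, map_pow, hm, inv_pow]
    have hgm : θ g * m = g := by rw [hmdef, mul_inv_cancel_left]
    refine ⟨g * s⁻¹, s, ?_, hθs, by group⟩
    show θ (g * s⁻¹) = g * s⁻¹
    rw [map_mul, map_inv, hθs, inv_inv]
    rw [← hs2, ← mul_assoc] at hgm
    rw [eq_mul_inv_iff_mul_eq, mul_assoc, ← mul_assoc, hgm]
  have key3 : ∀ g : Ω, f (θ g) = f g⁻¹ := by
    intro g
    obtain ⟨h, s, hh, hs, rfl⟩ := springer g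
    have hθh : θ h = h := hh
    have h1 : f (θ (h * s)) = f s⁻¹ := by
      rw [map_mul, hθh, hs]
      exact hfl s⁻¹ ⟨h, hh⟩
    have h2 : f ((h * s)⁻¹) = f s⁻¹ := by
      rw [mul_inv_rev]
      exact hfr s⁻¹ ⟨h⁻¹, inv_mem hh⟩
    rw [h1, h2]
  -- Schur orthogonality via eigenvalue + trace
  set A : V →ₗ[ℂ] V := dualTensorHom ℂ V V (φ₀ ⊗ₜ[ℂ] v₀) with hAdef
  have hA : ∀ w, A w = φ₀ w • v₀ := fun w => by
    rw [hAdef, dualTensorHom_apply]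
  have htrA : LinearMap.trace ℂ V A = 1 := by
    rw [hAdef, LinearMap.trace_eq_contract_apply, contractLeft_apply, hφ₀v₀]
  set T : V →ₗ[ℂ] V := ∑ g : Ω, ρ g⁻¹ ∘ₗ A ∘ₗ ρ g with hTdef
  have hTv : ∀ v, T v = ∑ g : Ω, φ₀ (ρ g v) • (ρ g⁻¹ v₀) := by
    intro v
    simp only [hTdef, LinearMap.coe_sum, Finset.sum_apply, LinearMap.coe_comp,
      Function.comp_apply, hA, map_smul]
  have hTcomm : ∀ (b : Ω) (v : V), T (ρ b v) = ρ b (T v) := by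
    intro b v
    rw [hTv, hTv, map_sum]
    refine Fintype.sum_equiv (Equiv.mulRight b) _ _ ?_
    intro g
    simp only [Equiv.coe_mulRight, map_smul]
    congr 1
    · congr 1
      rw [← Module.End.mul_apply, ← map_mul]
    · rw [← Module.End.mul_apply, ← map_mul, mul_inv_rev, mul_inv_cancel_left]
  obtain ⟨c, hc⟩ := Module.End.exists_eigenvalue (T : Module.End ℂ V)
  obtain ⟨w₀, hw₀⟩ := hc.exists_hasEigenvector
  set K : Submodule ℂ V := LinearMap.ker (T - c • LinearMap.id) with hKdef
  have hKinv : ∀ g : Ω, ∀ v ∈ K, ρ g v ∈ K := by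
    intro g v hv
    rw [hKdef, LinearMap.mem_ker] at hv ⊢
    simp only [LinearMap.sub_apply, LinearMap.smul_apply, LinearMap.id_apply] at hv ⊢
    rw [hTcomm, ← map_smul, ← map_sub, hv, map_zero]
  have hKne : K ≠ ⊥ := by
    intro hbot
    have : w₀ ∈ K := by
      rw [hKdef, LinearMap.mem_ker]
      simp only [LinearMap.sub_apply, LinearMap.smul_apply, LinearMap.id_apply]
      rw [hw₀.apply_eq_smul, sub_self]
    rw [hbot, Submodule.mem_bot] at this
    exact hw₀.2 this
  have hKtop : K = ⊤ := (hirr K hKinv).resolve_left hKne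
  have hT : ∀ v, T v = c • v := by
    intro v
    have : v ∈ K := hKtop ▸ Submodule.mem_top
    rw [hKdef, LinearMap.mem_ker] at this
    simp only [LinearMap.sub_apply, LinearMap.smul_apply, LinearMap.id_apply] at this
    exact sub_eq_zero.mp this
  -- trace computation: c = |Ω| / dim V ≠ 0
  have htrT1 : LinearMap.trace ℂ V T = (Fintype.card Ω : ℂ) := by
    rw [hTdef, map_sum]
    have : ∀ g : Ω, LinearMap.trace ℂ V (ρ g⁻¹ ∘ₗ A ∘ₗ ρ g) = 1 := by
      intro g
      have h1 : ρ g⁻¹ ∘ₗ A ∘ₗ ρ g = ρ g⁻¹ * (A * ρ g) := rfl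
      rw [h1, LinearMap.trace_mul_comm, mul_assoc, ← map_mul, mul_inv_cancel, map_one,
        mul_one, htrA]
    rw [Finset.sum_congr rfl (fun g _ => this g)]
    simp
  have htrT2 : LinearMap.trace ℂ V T = c * (Module.finrank ℂ V : ℂ) := by
    have hTid : T = c • LinearMap.id := by
      ext v
      rw [hT]
      rfl
    rw [hTid, map_smul, LinearMap.trace_id, smul_eq_mul]
  have hc0 : c ≠ 0 := by
    intro h0
    rw [htrT1, h0, zero_mul] at htrT2
    exact Nat.cast_ne_zero.mpr Fintype.card_ne_zero htrT2
  have hsum : ∑ g : Ω, f g * f g⁻¹ = c := by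
    have h1 : φ₀ (T v₀) = ∑ g : Ω, f g * f g⁻¹ := by
      rw [hTv, map_sum]
      refine Finset.sum_congr rfl fun g _ => ?_
      rw [map_smul, smul_eq_mul]
    have h2 : φ₀ (T v₀) = c := by
      rw [hT, map_smul, hφ₀v₀, smul_eq_mul, mul_one]
    rw [← h1, h2]
  -- the intertwining pairing
  set ℓ : V →ₗ[ℂ] Module.Dual ℂ V :=
    ∑ g : Ω, LinearMap.smulRight (φ₀ ∘ₗ ρ (θ g)) (φ₀ ∘ₗ ρ g) with hℓdef
  have hℓ : ∀ w v, ℓ w v = ∑ g : Ω, φ₀ (ρ (θ g) w) * φ₀ (ρ g v) := by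
    intro w v
    simp only [hℓdef, LinearMap.coe_sum, Finset.sum_apply, LinearMap.smulRight_apply,
      LinearMap.coe_comp, Function.comp_apply, LinearMap.smul_apply, smul_eq_mul]
  have hint : ∀ (a : Ω) (w : V), ℓ (ρ (θ a) w) = ρ.dual a (ℓ w) := by
    intro a w
    ext v
    have hRHS : (ρ.dual a (ℓ w)) v = (ℓ w) (ρ a⁻¹ v) := rfl
    rw [hRHS, hℓ, hℓ]
    refine Fintype.sum_equiv (Equiv.mulRight a) _ _ ?_
    intro g
    simp only [Equiv.coe_mulRight]
    congr 1
    · congr 1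
      rw [← Module.End.mul_apply, ← map_mul, ← map_mul]
    · congr 1
      rw [← Module.End.mul_apply, ← map_mul, mul_inv_cancel_right]
  have hℓv₀ : ℓ v₀ v₀ = c := by
    rw [hℓ, ← hsum]
    refine Finset.sum_congr rfl fun g _ => ?_
    rw [show φ₀ (ρ (θ g) v₀) = f (θ g) from rfl, key3, mul_comm]
  have hinj : Function.Injective ℓ := by
    rw [← LinearMap.ker_eq_bot]
    have hkinv : ∀ g : Ω, ∀ w ∈ LinearMap.ker ℓ, ρ g w ∈ LinearMap.ker ℓ := by
      intro g w hw
      rw [LinearMap.mem_ker] at hw ⊢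
      have : ρ g w = ρ (θ (θ g)) w := by rw [hθ]
      rw [this, hint, hw, map_zero]
    refine (hirr _ hkinv).resolve_right ?_
    intro htop
    have : v₀ ∈ LinearMap.ker ℓ := htop ▸ Submodule.mem_top
    rw [LinearMap.mem_ker] at this
    rw [this] at hℓv₀
    exact hc0 (by simpa using hℓv₀.symm)
  set E : V ≃ₗ[ℂ] Module.Dual ℂ V :=
    ℓ.linearEquivOfInjective hinj (Subspace.dual_finrank_eq).symm with hEdef
  have hEapp : ∀ w, E w = ℓ w := fun w =>
    LinearMap.linearEquivOfInjective_apply hinj (Subspace.dual_finrank_eq).symm w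
  refine ⟨E.symm, ?_⟩
  intro g φ
  have h2 : ℓ (E.symm φ) = φ := by rw [← hEapp]; exact E.apply_symm_apply φ
  calc E.symm (ρ.dual g φ) = E.symm (ρ.dual g (ℓ (E.symm φ))) := by rw [h2]
    _ = E.symm (ℓ (ρ (θ g) (E.symm φ))) := by rw [hint]
    _ = E.symm (E (ρ (θ g) (E.symm φ))) := by rw [hEapp]
    _ = ρ (θ g) (E.symm φ) := E.symm_apply_apply _
end

section
/- Let Γ be a finite group, θ an involution of Γ, and N ⊴ Γ a θ-invariant normal subgroup. Then |H^1(S₂, N)| ≤ |H^1(S₂, Γ)| · [Γ : N], where H^1(S₂, N) is formed with respect to the restriction of θ to N. -/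
/-!
Restricting cocycles from `N` to `Γ` gives a map `ψ : H¹(S₂, N) → H¹(S₂, Γ)`. Fix a
representative `u` of each class in the image; every `s` in the fibre is `θ(g)⁻¹ u g` for some
`g ∈ Γ`, and the left coset `gN` determines the class of `s` in `H¹(S₂, N)`: if `s` and `t` are
obtained from `u` through `g` and `g'`, then `t = θ(m)⁻¹ s m` with `m = g⁻¹ g' ∈ N`. Hence
`c ↦ (ψ c, gN)` injects `H¹(S₂, N)` into `H¹(S₂, Γ) × Γ/N`.
-/

/-- The first cohomology set `H¹(S₂, Γ)` of the two-element group acting on `Γ` through the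
involution `θ`: equivalence classes of `{s ∈ Γ | s * θ s = 1}` under
`s ∼ (θ g)⁻¹ * s * g`. -/
def H1Set {Γ : Type*} [Group Γ] (θ : Γ ≃* Γ) : Type _ :=
  Quot (fun s t : {x : Γ // x * θ x = 1} => ∃ g : Γ, (t : Γ) = (θ g)⁻¹ * (s : Γ) * g)

namespace H1Set

variable {Γ : Type*} [Group Γ] {θ : Γ ≃* Γ}

instance [Finite Γ] : Finite (H1Set θ) :=
  Quot.finite _

variable (θ) in
def Rel (s t : {x : Γ // x * θ x = 1}) : Prop :=
  ∃ g : Γ, (t : Γ) = (θ g)⁻¹ * (s : Γ) * g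

theorem rel_equivalence : Equivalence (Rel θ) where
  refl _ := ⟨1, by simp⟩
  symm := fun ⟨g, hg⟩ => ⟨g⁻¹, by rw [hg]; simp [mul_assoc]⟩
  trans := fun ⟨g, hg⟩ ⟨g', hg'⟩ => ⟨g * g', by rw [hg', hg]; simp [mul_assoc]⟩

theorem mk_eq_mk_iff {s t : {x : Γ // x * θ x = 1}} :
    (Quot.mk _ s : H1Set θ) = Quot.mk _ t ↔ ∃ g : Γ, (t : Γ) = (θ g)⁻¹ * (s : Γ) * g :=
  ⟨fun h => rel_equivalence.eqvGen_iff.mp (Quot.eqvGen_exact h), fun h => Quot.sound h⟩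

theorem exists_coe_out_eq (c : H1Set θ) (s : {x : Γ // x * θ x = 1})
    (hs : (Quot.mk _ s : H1Set θ) = c) : ∃ g : Γ, (s : Γ) = (θ g)⁻¹ * (c.out : Γ) * g :=
  mk_eq_mk_iff.mp (c.out_eq.trans hs.symm)

theorem eq_conj_of_eq_conj {s t u g g' : Γ}
    (hs : s = (θ g)⁻¹ * u * g) (ht : t = (θ g')⁻¹ * u * g') :
    t = (θ (g⁻¹ * g'))⁻¹ * s * (g⁻¹ * g') := by
  subst hs ht
  simp only [map_mul, map_inv]
  group

def map {G : Type*} [Group G] {θG : G ≃* G} (f : G →* Γ) (hf : ∀ x, f (θG x) = θ (f x)) :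
    H1Set θG → H1Set θ :=
  Quot.lift (fun s => Quot.mk _ ⟨f s, by rw [← hf, ← map_mul, s.2, map_one]⟩)
    (fun _ _ ⟨g, hg⟩ => Quot.sound ⟨f g, by simp [hg, hf]⟩)

section Subgroup

variable {N : Subgroup Γ} {θN : N ≃* N} (hθN : ∀ n : N, (θN n : Γ) = θ (n : Γ))
include hθN

theorem mk_eq_mk_of_mem {s t : {x : N // x * θN x = 1}} {g : Γ} (hg : g ∈ N)
    (hst : ((t : N) : Γ) = (θ g)⁻¹ * ((s : N) : Γ) * g) :
    (Quot.mk _ s : H1Set θN) = Quot.mk _ t :=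
  mk_eq_mk_iff.mpr ⟨⟨g, hg⟩, Subtype.ext (by simpa [hθN] using hst)⟩

theorem card_le_card_mul_index [Finite (H1Set θ)] [N.FiniteIndex] :
    Nat.card (H1Set θN) ≤ Nat.card (H1Set θ) * N.index := by
  let ψ : H1Set θN → H1Set θ := map N.subtype hθN
  have hψ (c : H1Set θN) : ∃ g : Γ, ((c.out : N) : Γ) = (θ g)⁻¹ * ((ψ c).out : Γ) * g :=
    exists_coe_out_eq (ψ c) _ (congrArg ψ c.out_eq)
  choose g hg using hψ
  have hinj : Function.Injective fun c => (ψ c, (g c : Γ ⧸ N)) := by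
    intro c c' h
    obtain ⟨hψc, hgc⟩ := Prod.mk.inj h
    have hc' := hg c'
    rw [← hψc] at hc'
    rw [← c.out_eq, ← c'.out_eq]
    exact mk_eq_mk_of_mem hθN (QuotientGroup.eq.mp hgc) (eq_conj_of_eq_conj (hg c) hc')
  calc Nat.card (H1Set θN)
      ≤ Nat.card (H1Set θ × Γ ⧸ N) := Nat.card_le_card_of_injective _ hinj
    _ = Nat.card (H1Set θ) * N.index := Nat.card_prod _ _

end Subgroup

end H1Set

theorem stmt_7_general (Γ : Type*) [Group Γ] [Fintype Γ]
    (θ : Γ ≃* Γ)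
    (N : Subgroup Γ)
    (θN : N ≃* N) (hθN : ∀ n : N, (θN n : Γ) = θ (n : Γ)) :
    Nat.card (H1Set θN) ≤ Nat.card (H1Set θ) * N.index :=
  H1Set.card_le_card_mul_index hθN

/-- If `Γ` is a finite group with involution `θ` and `N ⊴ Γ` is a `θ`-invariant normal
subgroup, then `|H¹(S₂, N)| ≤ |H¹(S₂, Γ)| * [Γ : N]`, where `H¹(S₂,N)` is formed with
respect to the restriction `θN` of `θ` to `N`. -/
theorem stmt_7 (Γ : Type*) [Group Γ] [Fintype Γ]
    (θ : Γ ≃* Γ) (hθ : ∀ g : Γ, θ (θ g) = g)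
    (N : Subgroup Γ) (hN : N.Normal) (hNinv : ∀ n ∈ N, θ n ∈ N)
    (θN : N ≃* N) (hθN : ∀ n : N, (θN n : Γ) = θ (n : Γ)) :
    Nat.card (H1Set θN) ≤ Nat.card (H1Set θ) * N.index :=
  stmt_7_general Γ θ N θN hθN
end

section
/- Let Γ be a finite group, θ an involution of Γ, and N ⊴ Γ a θ-invariant normal subgroup. Then |H^1(S₂, Γ)| ≤ |H^1(S₂, Γ/N)| · max_τ |H^1_τ(S₂, N)|, where Γ/N is equipped with the involution induced by θ, τ ranges over all automorphisms of N satisfying τ ∘ τ = id (including the identity automorphism), and H^1_τ(S₂, N) denotes the H^1 set of N formed with respect to τ. -/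
section Aux

variable {Γ : Type*} [Group Γ] (θ : Γ ≃* Γ)

private theorem h1rel_equivalence :
    Equivalence (fun s t : {x : Γ // x * θ x = 1} => ∃ g : Γ, (t : Γ) = (θ g)⁻¹ * (s : Γ) * g) := by
  constructor
  · intro s; exact ⟨1, by simp⟩
  · rintro s t ⟨g, hg⟩
    exact ⟨g⁻¹, by simp [hg]; group⟩
  · rintro s t u ⟨g, hg⟩ ⟨h, hh⟩
    exact ⟨g * h, by simp [hh, hg]; group⟩

private theorem H1Set.mk_eq_mk {s t : {x : Γ // x * θ x = 1}} :
    (Quot.mk _ s : H1Set θ) = Quot.mk _ t ↔ ∃ g : Γ, (t : Γ) = (θ g)⁻¹ * (s : Γ) * g := by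
  constructor
  · intro h
    exact (h1rel_equivalence θ).eqvGen_iff.mp (Quot.eqvGen_exact h)
  · exact fun h => Quot.sound h

/-- The twisted involution `n ↦ s * θ n * s⁻¹` of a `θ`-invariant normal subgroup. -/
private def conjInvol (hθ : ∀ g : Γ, θ (θ g) = g) (N : Subgroup Γ) [hN : N.Normal]
    (hNinv : ∀ n ∈ N, θ n ∈ N) (s : Γ) (hs : s * θ s = 1) : N ≃* N where
  toFun n := ⟨s * θ (n : Γ) * s⁻¹, hN.conj_mem _ (hNinv _ n.2) s⟩
  invFun n := ⟨s * θ (n : Γ) * s⁻¹, hN.conj_mem _ (hNinv _ n.2) s⟩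
  left_inv n := Subtype.ext (by
    have h1 : θ s = s⁻¹ := eq_inv_of_mul_eq_one_right hs
    simp only [map_mul, map_inv, hθ, h1, inv_inv]
    group)
  right_inv n := Subtype.ext (by
    have h1 : θ s = s⁻¹ := eq_inv_of_mul_eq_one_right hs
    simp only [map_mul, map_inv, hθ, h1, inv_inv]
    group)
  map_mul' a b := Subtype.ext (by
    simp only [map_mul, Subgroup.coe_mul]
    group)

private theorem conjInvol_coe (hθ : ∀ g : Γ, θ (θ g) = g) (N : Subgroup Γ) [hN : N.Normal]
    (hNinv : ∀ n ∈ N, θ n ∈ N) (s : Γ) (hs : s * θ s = 1) (n : N) :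
    ((conjInvol θ hθ N hNinv s hs n : N) : Γ) = s * θ (n : Γ) * s⁻¹ := rfl

private theorem conjInvol_invol (hθ : ∀ g : Γ, θ (θ g) = g) (N : Subgroup Γ) [hN : N.Normal]
    (hNinv : ∀ n ∈ N, θ n ∈ N) (s : Γ) (hs : s * θ s = 1) (n : N) :
    conjInvol θ hθ N hNinv s hs (conjInvol θ hθ N hNinv s hs n) = n :=
  (conjInvol θ hθ N hNinv s hs).left_inv n

private theorem card_le_of_fiber_le {α β : Type*} [Finite α] [Finite β] (f : α → β) {B : ℕ}
    (h : ∀ b : β, Nat.card {a : α // f a = b} ≤ B) : Nat.card α ≤ Nat.card β * B := by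
  classical
  cases nonempty_fintype α
  cases nonempty_fintype β
  rw [Nat.card_eq_fintype_card, Nat.card_eq_fintype_card]
  calc Fintype.card α = ∑ b : β, Fintype.card {a : α // f a = b} := by
        rw [← Fintype.card_sigma]
        exact Fintype.card_congr (Equiv.sigmaFiberEquiv f).symm
    _ ≤ Fintype.card β * B := by
        rw [Fintype.card, ← smul_eq_mul]
        apply Finset.sum_le_card_nsmul
        intro b _
        rw [← Nat.card_eq_fintype_card]
        exact h b

end Aux

/-- If `Γ` is a finite group with involution `θ` and `N ⊴ Γ` is a `θ`-invariant normal
subgroup, then `|H¹(S₂, Γ)| ≤ |H¹(S₂, Γ/N)| * max_τ |H¹_τ(S₂, N)|`, where `Γ/N` carries the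
involution induced by `θ` and `τ` ranges over all automorphisms of `N` with `τ ∘ τ = id`. -/
theorem stmt_8 (Γ : Type*) [Group Γ] [Fintype Γ]
    (θ : Γ ≃* Γ) (hθ : ∀ g : Γ, θ (θ g) = g)
    (N : Subgroup Γ) [hN : N.Normal] (hNinv : ∀ n ∈ N, θ n ∈ N)
    (θbar : (Γ ⧸ N) ≃* (Γ ⧸ N))
    (hbar : ∀ g : Γ, θbar (QuotientGroup.mk g) = QuotientGroup.mk (θ g)) :
    Nat.card (H1Set θ) ≤ Nat.card (H1Set θbar) *
      ⨆ τ : {τ : N ≃* N // ∀ x : N, τ (τ x) = x}, Nat.card (H1Set τ.val) := by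
  classical
  haveI : Finite (H1Set θ) := Quot.finite _
  haveI : Finite (H1Set θbar) := Quot.finite _
  haveI : Finite (N ≃* N) :=
    Finite.of_injective (fun e : N ≃* N => (e : N → N)) DFunLike.coe_injective
  -- the map `H¹(Γ) → H¹(Γ/N)`
  set F : {x : Γ // x * θ x = 1} → {x : Γ ⧸ N // x * θbar x = 1} := fun s =>
    ⟨QuotientGroup.mk (s : Γ), by
      rw [hbar, ← QuotientGroup.mk_mul, s.2, QuotientGroup.mk_one]⟩ with hF
  have fresp : ∀ s t : {x : Γ // x * θ x = 1},
      (∃ g : Γ, (t : Γ) = (θ g)⁻¹ * (s : Γ) * g) →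
      ∃ g : Γ ⧸ N, (F t : Γ ⧸ N) = (θbar g)⁻¹ * (F s : Γ ⧸ N) * g := by
    rintro s t ⟨g, hg⟩
    refine ⟨QuotientGroup.mk g, ?_⟩
    simp only [hF, hg, hbar, QuotientGroup.mk_mul, QuotientGroup.mk_inv]
  set f : H1Set θ → H1Set θbar := Quot.map F fresp with hf
  have fmk : ∀ s : {x : Γ // x * θ x = 1}, f (Quot.mk _ s) = Quot.mk _ (F s) := fun s => rfl
  set B : ℕ := ⨆ τ : {τ : N ≃* N // ∀ x : N, τ (τ x) = x}, Nat.card (H1Set τ.val) with hB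
  have hbdd : BddAbove (Set.range
      fun τ : {τ : N ≃* N // ∀ x : N, τ (τ x) = x} => Nat.card (H1Set τ.val)) :=
    Set.Finite.bddAbove (Set.finite_range _)
  have key : ∀ c : H1Set θbar, Nat.card {x : H1Set θ // f x = c} ≤ B := by
    intro c
    rcases isEmpty_or_nonempty {x : H1Set θ // f x = c} with he | hne
    · rw [Nat.card_of_isEmpty]
      exact Nat.zero_le _
    · obtain ⟨⟨x, hx⟩⟩ := hne
      obtain ⟨s, rfl⟩ := Quot.exists_rep x
      have hθs : θ (s : Γ) = (s : Γ)⁻¹ := eq_inv_of_mul_eq_one_right s.2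
      have hθsinv : θ ((s : Γ)⁻¹) = (s : Γ) := by rw [map_inv, hθs, inv_inv]
      set τ : N ≃* N := conjInvol θ hθ N hNinv (s : Γ) s.2 with hτdef
      have hτ : ∀ x : N, τ (τ x) = x := conjInvol_invol θ hθ N hNinv (s : Γ) s.2
      haveI : Finite (H1Set τ) := Quot.finite _
      refine le_trans ?_ (le_ciSup hbdd ⟨τ, hτ⟩)
      -- a surjection from the `τ`-cocycles of `N` onto the fiber
      have qcoc : ∀ n : {n : N // n * τ n = 1},
          ((n.1 : Γ) * (s : Γ)) * θ ((n.1 : Γ) * (s : Γ)) = 1 := by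
        intro n
        have hn : ((n.1 : Γ)) * ((s : Γ) * θ (n.1 : Γ) * (s : Γ)⁻¹) = 1 := by
          have := congrArg (fun z : N => (z : Γ)) n.2
          simpa [hτdef, conjInvol_coe] using this
        rw [map_mul, hθs]
        calc (n.1 : Γ) * (s : Γ) * (θ (n.1 : Γ) * (s : Γ)⁻¹)
            = ((n.1 : Γ)) * ((s : Γ) * θ (n.1 : Γ) * (s : Γ)⁻¹) := by group
          _ = 1 := hn
      have qfib : ∀ n : {n : N // n * τ n = 1},
          f (Quot.mk _ ⟨(n.1 : Γ) * (s : Γ), qcoc n⟩) = c := by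
        intro n
        rw [fmk, ← hx, fmk]
        congr 1
        apply Subtype.ext
        simp only [hF]
        rw [QuotientGroup.mk_mul]
        have : (QuotientGroup.mk (n.1 : Γ) : Γ ⧸ N) = 1 :=
          (QuotientGroup.eq_one_iff _).mpr n.1.2
        rw [this, one_mul]
      set q : {n : N // n * τ n = 1} → {x : H1Set θ // f x = c} := fun n =>
        ⟨Quot.mk _ ⟨(n.1 : Γ) * (s : Γ), qcoc n⟩, qfib n⟩ with hq
      have qresp : ∀ a b : {n : N // n * τ n = 1},
          (∃ m : N, (b : N) = (τ m)⁻¹ * (a : N) * m) → q a = q b := by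
        rintro a b ⟨m, hm⟩
        apply Subtype.ext
        apply Quot.sound
        refine ⟨(s : Γ)⁻¹ * (m : Γ) * (s : Γ), ?_⟩
        have hb : ((b.1 : N) : Γ) =
            ((s : Γ) * θ (m : Γ) * (s : Γ)⁻¹)⁻¹ * ((a.1 : N) : Γ) * (m : Γ) := by
          have := congrArg (fun z : N => (z : Γ)) hm
          simpa [hτdef, conjInvol_coe] using this
        simp only [map_mul, map_inv, hθs, hθsinv, inv_inv]
        rw [hb]
        group
      set ψ : H1Set τ → {x : H1Set θ // f x = c} := Quot.lift q qresp with hψdef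
      have hψsurj : Function.Surjective ψ := by
        rintro ⟨y, hy⟩
        obtain ⟨t, rfl⟩ := Quot.exists_rep y
        have hθt : θ (t : Γ) = (t : Γ)⁻¹ := eq_inv_of_mul_eq_one_right t.2
        -- relate the images in `Γ/N`
        have : (Quot.mk _ (F s) : H1Set θbar) = Quot.mk _ (F t) := by
          rw [← fmk, ← fmk, hx, hy]
        obtain ⟨gbar, hg⟩ := (H1Set.mk_eq_mk θbar).mp this
        obtain ⟨g, rfl⟩ := QuotientGroup.mk_surjective gbar
        have hmk : (QuotientGroup.mk ((θ g)⁻¹ * (s : Γ) * g) : Γ ⧸ N) =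
            QuotientGroup.mk (t : Γ) := by
          have hg' : (QuotientGroup.mk (t : Γ) : Γ ⧸ N) =
              (θbar (QuotientGroup.mk g))⁻¹ * QuotientGroup.mk (s : Γ) * QuotientGroup.mk g := by
            simpa [hF] using hg
          rw [hg', hbar]
          simp [QuotientGroup.mk_mul, QuotientGroup.mk_inv]
        have hk : ((θ g)⁻¹ * (s : Γ) * g)⁻¹ * (t : Γ) ∈ N := QuotientGroup.eq.mp hmk
        set k : Γ := ((θ g)⁻¹ * (s : Γ) * g)⁻¹ * (t : Γ) with hkdef
        have hnval : θ g * (t : Γ) * g⁻¹ * (s : Γ)⁻¹ = (s : Γ) * (g * k * g⁻¹) * (s : Γ)⁻¹ := by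
          rw [hkdef]; group
        have hnmem : θ g * (t : Γ) * g⁻¹ * (s : Γ)⁻¹ ∈ N := by
          rw [hnval]
          exact hN.conj_mem _ (hN.conj_mem _ hk g) (s : Γ)
        have hncoc : (⟨θ g * (t : Γ) * g⁻¹ * (s : Γ)⁻¹, hnmem⟩ : N) *
            τ ⟨θ g * (t : Γ) * g⁻¹ * (s : Γ)⁻¹, hnmem⟩ = 1 := by
          apply Subtype.ext
          simp only [hτdef, conjInvol_coe, Subgroup.coe_mul, OneMemClass.coe_one]
          simp only [map_mul, map_inv, hθ, hθt, hθsinv, inv_inv]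
          group
        refine ⟨Quot.mk _ ⟨⟨θ g * (t : Γ) * g⁻¹ * (s : Γ)⁻¹, hnmem⟩, hncoc⟩, Subtype.ext ?_⟩
        simp only [hψdef, hq, Quot.lift_mk]
        apply (H1Set.mk_eq_mk θ).mpr
        exact ⟨g, by group⟩
      exact Nat.card_le_card_of_surjective ψ hψsurj
  exact card_le_of_fiber_le f key
end

section
/- For every positive integer d, every element of GL_d(ℤ) of finite order has order at most 3^{d²}. -/
/-!
Minkowski's argument. Reduction modulo `3` is injective on the elements of finite order of
`GL_d(ℤ)`, so the order of `g` divides `|GL_d(𝔽₃)| ≤ 3 ^ d²`. Injectivity amounts to the kernel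
having no element of prime order `p`: if `A = 1 + ℓ ^ k B` with `k ≥ 1`, `ℓ` an odd prime and
`A ^ p = 1`, the binomial expansion of `(1 + ℓ ^ k B) ^ p` forces `ℓ ∣ B`, so `A - 1` is divisible
by every power of `ℓ`, hence `A = 1`.
-/

open Finset

section Ring

variable {R : Type*} [Ring R]

theorem exists_one_add_pow_eq (x : R) (n : ℕ) : ∃ y, (1 + x) ^ n = 1 + n * x + x ^ 2 * y := by
  induction n with
  | zero => exact ⟨0, by simp⟩
  | succ n ih =>
    obtain ⟨y, hy⟩ := ih
    refine ⟨n + y + y * x, ?_⟩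
    rw [pow_succ, hy, Nat.cast_succ, mul_add (x ^ 2) _ (y * x), mul_add (x ^ 2) (n : R) y,
      ← Nat.cast_comm]
    noncomm_ring

theorem exists_one_add_pow_prime_eq {p : ℕ} (hp : p.Prime) (x : R) :
    ∃ y, (1 + x) ^ p = 1 + p * x + p * x ^ 2 * y + x ^ p := by
  refine ⟨∑ k ∈ Ioo 1 p, x ^ (k - 2) * (p.choose k / p : ℕ), ?_⟩
  have hIoo : Ioo 0 p = insert 1 (Ioo 1 p) := by
    rw [Ioo_insert_left hp.one_lt, ← Ico_add_one_left_eq_Ioo, zero_add]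
  have hx2 : ∀ k ∈ Ioo 1 p, x ^ k = x ^ 2 * x ^ (k - 2) := fun k hk => by
    rw [← pow_add, Nat.add_sub_cancel' (mem_Ioo.mp hk).1]
  rw [add_comm 1 x, (Commute.one_right x).add_pow_prime_eq' hp, hIoo,
    sum_insert (by simp), sum_congr rfl fun k hk => by rw [hx2 k hk]]
  simp only [one_pow, mul_one, pow_one, Nat.choose_one_right, Nat.div_self hp.pos, Nat.cast_one,
    mul_assoc, ← mul_sum]
  noncomm_ring

theorem Nat.Coprime.natCast_dvd_of_dvd_mul_left {ℓ n : ℕ} (h : ℓ.Coprime n) {b : R}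
    (hb : (ℓ : R) ∣ n * b) : (ℓ : R) ∣ b := by
  obtain ⟨u, v, huv⟩ := Nat.Coprime.isCoprime h
  obtain ⟨c, hc⟩ := hb
  refine ⟨u * b + v * c, ?_⟩
  have huv' : (u : R) * ℓ + v * n = 1 := by exact_mod_cast congrArg (Int.cast : ℤ → R) huv
  calc b = u * (ℓ * b) + v * (n * b) := by
        rw [← mul_assoc, ← mul_assoc, ← add_mul, huv', one_mul]
    _ = ℓ * (u * b + v * c) := by
      rw [hc, (Int.cast_commute u (ℓ : R)).left_comm, (Int.cast_commute v (ℓ : R)).left_comm,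
        mul_add]

theorem isLeftRegular_natCast [IsAddTorsionFree R] {n : ℕ} (hn : n ≠ 0) :
    IsLeftRegular (n : R) :=
  fun x y h => nsmul_right_injective hn (by simpa only [nsmul_eq_mul] using h)

theorem pow_succ_dvd_sub_one_of_pow_eq_one [IsAddTorsionFree R] {ℓ p k : ℕ} (hℓ : ℓ.Prime)
    (hℓ2 : ℓ ≠ 2) (hp : p.Prime) (hk : k ≠ 0) {a : R} (ha : (ℓ : R) ^ k ∣ a - 1)
    (hap : a ^ p = 1) : (ℓ : R) ^ (k + 1) ∣ a - 1 := by
  obtain ⟨b, hb⟩ := ha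
  obtain rfl : a = 1 + ℓ ^ k * b := by rw [← hb, add_sub_cancel]
  have hreg : ∀ j, IsLeftRegular ((ℓ : R) ^ j) := fun j =>
    (isLeftRegular_natCast hℓ.ne_zero).pow j
  rw [add_sub_cancel_left, pow_succ, (hreg k).dvd_cancel_left]
  set x := (ℓ : R) ^ k * b with hx
  have hpow : ∀ m, x ^ m = ℓ ^ (k * m) * b ^ m := fun m => by
    rw [((Nat.cast_commute ℓ b).pow_left k).mul_pow, pow_mul]
  rcases eq_or_ne ℓ p with rfl | hℓp
  · obtain ⟨y, hy⟩ := exists_one_add_pow_prime_eq hℓ x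
    have h0 : (ℓ : R) * x + (ℓ * x ^ 2 * y + x ^ ℓ) = 0 := by
      rwa [hap, add_assoc, add_assoc, eq_comm, add_eq_left] at hy
    rw [← (hreg (k + 1)).dvd_cancel_left, ← pow_succ, pow_succ' (ℓ : R) k, mul_assoc, ← hx]
    refine (dvd_add_left (dvd_add ?_ ?_)).mp (h0 ▸ dvd_zero _)
    · rw [hpow, ← mul_assoc, ← pow_succ']
      exact dvd_mul_of_dvd_left (dvd_mul_of_dvd_left (pow_dvd_pow _ (by omega)) _) _
    · have : 3 ≤ ℓ := by have := hℓ.two_le; omega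
      rw [hpow]
      exact dvd_mul_of_dvd_left (pow_dvd_pow _ (by nlinarith [Nat.pos_of_ne_zero hk])) _
  · obtain ⟨y, hy⟩ := exists_one_add_pow_eq x p
    have h0 : (p : R) * x + x ^ 2 * y = 0 := by
      rwa [hap, add_assoc, eq_comm, add_eq_left] at hy
    refine ((Nat.coprime_primes hℓ hp).2 hℓp).natCast_dvd_of_dvd_mul_left ?_
    rw [← (hreg k).dvd_cancel_left, ← pow_succ, ← mul_assoc, ← (Nat.cast_commute p _).eq,
      mul_assoc, ← hx]
    refine (dvd_add_left ?_).mp (h0 ▸ dvd_zero _)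
    rw [hpow]
    exact dvd_mul_of_dvd_left (dvd_mul_of_dvd_left (pow_dvd_pow _ (by omega)) _) _

theorem pow_dvd_sub_one_of_pow_eq_one [IsAddTorsionFree R] {ℓ p : ℕ} (hℓ : ℓ.Prime)
    (hℓ2 : ℓ ≠ 2) (hp : p.Prime) {a : R} (ha : (ℓ : R) ∣ a - 1) (hap : a ^ p = 1) (k : ℕ) :
    (ℓ : R) ^ k ∣ a - 1 := by
  induction k with
  | zero => simp
  | succ k ih =>
    rcases eq_or_ne k 0 with rfl | hk
    · simpa using ha
    · exact pow_succ_dvd_sub_one_of_pow_eq_one hℓ hℓ2 hp hk ih hap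

end Ring

theorem Subgroup.eq_one_of_isOfFinOrder_of_forall_prime {G : Type*} [Group G] {S : Subgroup G}
    (hS : ∀ x ∈ S, ∀ p : ℕ, p.Prime → x ^ p = 1 → x = 1) {g : G} (hgS : g ∈ S)
    (hg : IsOfFinOrder g) : g = 1 := by
  by_contra hne
  have hp : (orderOf g).minFac.Prime := Nat.minFac_prime (by rwa [Ne, orderOf_eq_one_iff])
  have hord := orderOf_pow_orderOf_div hg.orderOf_pos.ne' (Nat.minFac_dvd (orderOf g))
  have hx := hS _ (S.pow_mem hgS _) _ hp (hord ▸ pow_orderOf_eq_one _)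
  rw [hx, orderOf_one] at hord
  exact hp.one_lt.ne hord

theorem orderOf_map_eq_of_forall_mem_ker {G H : Type*} [Group G] [Monoid H] (f : G →* H)
    (hf : ∀ x ∈ f.ker, ∀ p : ℕ, p.Prime → x ^ p = 1 → x = 1) {g : G} (hg : IsOfFinOrder g) :
    orderOf (f g) = orderOf g := by
  refine Nat.dvd_antisymm (orderOf_map_dvd f g) (orderOf_dvd_of_pow_eq_one ?_)
  refine Subgroup.eq_one_of_isOfFinOrder_of_forall_prime hf ?_ hg.pow
  rw [MonoidHom.mem_ker, map_pow, pow_orderOf_eq_one]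

namespace Matrix

variable {n : Type*} [Fintype n] [DecidableEq n]

instance {m : Type*} {α : Type*} [AddMonoid α] [IsAddTorsionFree α] :
    IsAddTorsionFree (Matrix m n α) :=
  inferInstanceAs (IsAddTorsionFree (m → n → α))

theorem natCast_mul_apply {α : Type*} [Semiring α] (c : ℕ) (M : Matrix n n α) (i j : n) :
    ((c : Matrix n n α) * M) i j = c * M i j := by
  rw [← nsmul_eq_mul, smul_apply, nsmul_eq_mul]

theorem natCast_dvd_apply {α : Type*} [Semiring α] {c : ℕ} {M : Matrix n n α}
    (h : (c : Matrix n n α) ∣ M) (i j : n) : (c : α) ∣ M i j := by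
  obtain ⟨N, rfl⟩ := h
  exact ⟨N i j, natCast_mul_apply c N i j⟩

theorem eq_zero_of_forall_natCast_pow_dvd {ℓ : ℕ} (hℓ : 1 < ℓ) {M : Matrix n n ℤ}
    (h : ∀ k, (ℓ : Matrix n n ℤ) ^ k ∣ M) : M = 0 := by
  ext i j
  have hdvd := natCast_dvd_apply (c := ℓ ^ (M i j).natAbs) (by exact_mod_cast h _) i j
  exact Int.eq_zero_of_dvd_of_natAbs_lt_natAbs hdvd (by simpa using Nat.lt_pow_self hℓ)

theorem natCast_dvd_of_map_eq_zero {ℓ : ℕ} {M : Matrix n n ℤ}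
    (h : M.map (Int.cast : ℤ → ZMod ℓ) = 0) : (ℓ : Matrix n n ℤ) ∣ M := by
  refine ⟨M.map (· / ℓ), ?_⟩
  ext i j
  rw [natCast_mul_apply, map_apply,
    Int.mul_ediv_cancel' ((ZMod.intCast_zmod_eq_zero_iff_dvd _ _).mp (congrFun₂ h i j))]

namespace GeneralLinearGroup

theorem eq_one_of_map_eq_one_of_pow_eq_one {ℓ p : ℕ} (hℓ : ℓ.Prime) (hℓ2 : ℓ ≠ 2)
    (hp : p.Prime) {g : GL n ℤ} (hg : map (Int.castRingHom (ZMod ℓ)) g = 1) (hgp : g ^ p = 1) :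
    g = 1 := by
  have hdvd : (ℓ : Matrix n n ℤ) ∣ g - 1 := by
    apply natCast_dvd_of_map_eq_zero
    have hmap : (g : Matrix n n ℤ).map (Int.cast : ℤ → ZMod ℓ) = 1 := congrArg Units.val hg
    rw [Matrix.map_sub, Matrix.map_one, hmap, sub_self] <;> simp
  have hgp' : (g : Matrix n n ℤ) ^ p = 1 := by rw [← Units.val_pow_eq_pow_val, hgp, Units.val_one]
  ext1
  rw [Units.val_one, ← sub_eq_zero]
  exact eq_zero_of_forall_natCast_pow_dvd hℓ.one_lt
    (pow_dvd_sub_one_of_pow_eq_one hℓ hℓ2 hp hdvd hgp')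

theorem natCard_le {R : Type*} [CommRing R] [Finite R] :
    Nat.card (GL n R) ≤ Nat.card R ^ (Fintype.card n ^ 2) := by
  calc Nat.card (GL n R) ≤ Nat.card (Matrix n n R) :=
        Nat.card_le_card_of_injective _ Units.val_injective
    _ = Nat.card R ^ (Fintype.card n ^ 2) := by
        simp [Matrix, Nat.card_fun, ← pow_mul, sq]

end GeneralLinearGroup

end Matrix

theorem stmt_18_general (d : ℕ) (g : Matrix.GeneralLinearGroup (Fin d) ℤ)
    (hg : IsOfFinOrder g) :
    orderOf g ≤ 3 ^ (d ^ 2) := by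
  let f := Matrix.GeneralLinearGroup.map (n := Fin d) (Int.castRingHom (ZMod 3))
  have hf : ∀ x ∈ f.ker, ∀ p : ℕ, p.Prime → x ^ p = 1 → x = 1 := fun x hx _ hp =>
    Matrix.GeneralLinearGroup.eq_one_of_map_eq_one_of_pow_eq_one Nat.prime_three (by decide) hp hx
  calc orderOf g = orderOf (f g) := (orderOf_map_eq_of_forall_mem_ker f hf hg).symm
    _ ≤ Nat.card (GL (Fin d) (ZMod 3)) := Nat.le_of_dvd Nat.card_pos (orderOf_dvd_natCard _)
    _ ≤ 3 ^ (d ^ 2) := by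
      simpa using Matrix.GeneralLinearGroup.natCard_le (n := Fin d) (R := ZMod 3)

/-- Every element of finite order in `GL_d(ℤ)` has order at most `3 ^ (d²)`. -/
theorem stmt_18 (d : ℕ) (hd : 0 < d) (g : Matrix.GeneralLinearGroup (Fin d) ℤ)
    (hg : IsOfFinOrder g) :
    orderOf g ≤ 3 ^ (d ^ 2) :=
  stmt_18_general d g hg
end
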